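/- Let (γ_j)_{j≥1} be a nonnegative nonincreasing sequence with Σ_j γ_j = 1, let α ∈ (0,1] and W_0 ∈ [0, α]. For t ∈ ℕ let r_1 < r_2 < ... be any (possibly finite) increasing sequence of rejection times in [t], with the convention γ_{t+1−r_j} := 0 when r_j is undefined. Define α_{t+1} = γ_{t+1}·W_0 + γ_{t+1−r_1}·(α − W_0) + (Σ_{j≥2} γ_{t+1−r_j})·α. Then for all t, Σ_{s=1}^{t+1} α_s ≤ W_0 + 1{r_1 ≤ t}·(α − W_0) + α·#{j ≥ 2 : r_j ≤ t} ≤ α·(#{j : r_j ≤ t} ∨ 1). -/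

import Mathlib

/-!
Exchanging the order of summation splits `∑_{s ≤ t+1} α_s` into `W₀ ∑_s γ_s`,
`(α - W₀) ∑_s γ_{s - r₁}` and `α ∑_s γ_{s - r_j}` for `j ≥ 2`. Each shifted sum is a partial
sum of `(γ_j)_{j ≥ 1}`, hence at most `1`, and vanishes when `r_j > t` because `γ₀ = 0`.
-/

open Finset

section ShiftedSums

variable {γ : ℕ → ℝ}

theorem sum_Icc_one_sub_eq_sum_range (hγ0 : γ 0 = 0) (n r : ℕ) :
    ∑ s ∈ Icc 1 n, γ (s - r) = ∑ k ∈ range (n - r), γ (k + 1) := by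
  induction n with
  | zero => simp
  | succ n ih =>
    rw [sum_Icc_succ_top (by omega), ih]
    rcases le_or_gt r n with h | h
    · rw [show n + 1 - r = n - r + 1 by omega, sum_range_succ]
    · rw [show n + 1 - r = 0 by omega, show n - r = 0 by omega, hγ0]
      simp

theorem sum_Icc_one_sub_le_ite {c : ℝ} (hγ0 : γ 0 = 0) (hγnn : ∀ j, 0 ≤ γ j)
    (hγ : HasSum (fun j => γ (j + 1)) c) (t r : ℕ) :
    ∑ s ∈ Icc 1 (t + 1), γ (s - r) ≤ if r ≤ t then c else 0 := by
  rw [sum_Icc_one_sub_eq_sum_range hγ0]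
  split_ifs with h
  · exact sum_le_hasSum _ (fun j _ => hγnn _) hγ
  · simp [show t + 1 - r = 0 by omega]

end ShiftedSums

theorem le_apply_of_strictMonoOn_Ici_one {r : ℕ → ℕ} (hr1 : 1 ≤ r 1)
    (hr : StrictMonoOn r (Set.Ici 1)) {j : ℕ} (hj : 1 ≤ j) : j ≤ r j := by
  have hmono : StrictMono fun k => r (k + 1) := fun a b hab =>
    hr (by simp) (by simp) (by omega)
  have := hmono.add_le_nat (j - 1) 0
  simp only [zero_add, add_zero, Nat.sub_add_cancel hj] at this
  omega

section LordPlusPlus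

variable {γ : ℕ → ℝ} {α W0 : ℝ} {r : ℕ → ℕ} {a : ℕ → ℝ}

theorem filter_Icc_two_succ_eq (hr : ∀ j, 1 ≤ j → j ≤ r j) (t : ℕ) :
    (Icc 2 (t + 1)).filter (fun j => r j ≤ t) = (Icc 2 t).filter (fun j => r j ≤ t) := by
  ext j
  have := hr j
  simp only [mem_filter, mem_Icc]
  omega

theorem lordpp_sum_le_earned (hγ0 : γ 0 = 0) (hγnn : ∀ j, 0 ≤ γ j)
    (hγ : HasSum (fun j => γ (j + 1)) 1) (hW0 : W0 ∈ Set.Icc 0 α)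
    (hr : ∀ j, 1 ≤ j → j ≤ r j)
    (ha : ∀ t, a (t + 1) = γ (t + 1) * W0 + γ (t + 1 - r 1) * (α - W0)
        + (∑ j ∈ Icc 2 (t + 1), γ (t + 1 - r j)) * α) (t : ℕ) :
    ∑ s ∈ Icc 1 (t + 1), a s
      ≤ W0 + (if r 1 ≤ t then α - W0 else 0)
        + α * ((Icc 2 t).filter (fun j => r j ≤ t)).card := by
  obtain ⟨hW0, hW0α⟩ := hW0
  have hα : 0 ≤ α := hW0.trans hW0α
  have hspent := sum_Icc_one_sub_le_ite hγ0 hγnn hγ t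
  have hpoint : ∀ s ∈ Icc 1 (t + 1), a s ≤ γ (s - 0) * W0 + γ (s - r 1) * (α - W0)
      + (∑ j ∈ Icc 2 (t + 1), γ (s - r j)) * α := by
    intro s hs
    obtain ⟨hs1, hst⟩ := mem_Icc.1 hs
    obtain ⟨u, rfl⟩ : ∃ u, s = u + 1 := ⟨s - 1, by omega⟩
    rw [ha, Nat.sub_zero]
    gcongr
    exact fun j _ _ => hγnn _
  calc ∑ s ∈ Icc 1 (t + 1), a s
      ≤ ∑ s ∈ Icc 1 (t + 1), (γ (s - 0) * W0 + γ (s - r 1) * (α - W0)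
          + (∑ j ∈ Icc 2 (t + 1), γ (s - r j)) * α) := sum_le_sum hpoint
    _ = (∑ s ∈ Icc 1 (t + 1), γ (s - 0)) * W0
          + (∑ s ∈ Icc 1 (t + 1), γ (s - r 1)) * (α - W0)
          + ∑ j ∈ Icc 2 (t + 1), (∑ s ∈ Icc 1 (t + 1), γ (s - r j)) * α := by
      simp only [sum_add_distrib, ← sum_mul]
      rw [sum_comm]
    _ ≤ 1 * W0 + (if r 1 ≤ t then 1 else 0) * (α - W0)
          + ∑ j ∈ Icc 2 (t + 1), (if r j ≤ t then 1 else 0) * α := by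
      gcongr with j
      · simpa using hspent 0
      · exact hspent (r 1)
      · exact hspent (r j)
    _ = _ := by
      rw [← sum_mul, sum_boole, filter_Icc_two_succ_eq hr]
      split_ifs <;> ring

theorem lordpp_earned_le_mul_max_card (hW0α : W0 ≤ α) (hr1 : 1 ≤ r 1)
    (hr : MonotoneOn r (Set.Ici 1)) (t : ℕ) :
    W0 + (if r 1 ≤ t then α - W0 else 0) + α * ((Icc 2 t).filter (fun j => r j ≤ t)).card
      ≤ α * max (((Icc 1 t).filter (fun j => r j ≤ t)).card : ℝ) 1 := by
  by_cases h : r 1 ≤ t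
  · rw [← insert_Icc_add_one_left_eq_Icc (hr1.trans h), filter_insert, if_pos h, if_pos h,
      card_insert_of_notMem (by simp)]
    push_cast
    rw [max_eq_left (by simp)]
    linarith
  · have hnone : ∀ j ∈ Icc 1 t, ¬ r j ≤ t := fun j hj hj' =>
      h ((hr (Set.mem_Ici.2 le_rfl) (Set.mem_Ici.2 (mem_Icc.1 hj).1) (mem_Icc.1 hj).1).trans hj')
    have hnone' : ∀ j ∈ Icc 2 t, ¬ r j ≤ t := fun j hj =>
      hnone j (Icc_subset_Icc_left (by simp) hj)
    rw [filter_false_of_mem hnone, filter_false_of_mem hnone', if_neg h]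
    simpa using hW0α

end LordPlusPlus

/-- `γ 0 = 0` encodes the convention that `γ (t+1-r j) = 0` when the `j`-th rejection has not
occurred by time `t`. -/
theorem stmt6_general (γ : ℕ → ℝ) (hγ0 : γ 0 = 0) (hγnn : ∀ j, 0 ≤ γ j)
    (hγsum : ∑' j, γ (j + 1) = 1)
    (α W0 : ℝ) (hW0 : W0 ∈ Set.Icc 0 α)
    (r : ℕ → ℕ) (hr1 : 1 ≤ r 1) (hrmono : StrictMonoOn r (Set.Ici 1))
    (a : ℕ → ℝ)
    (ha : ∀ t, a (t + 1) = γ (t + 1) * W0 + γ (t + 1 - r 1) * (α - W0)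
        + (∑ j ∈ Finset.Icc 2 (t + 1), γ (t + 1 - r j)) * α) :
    ∀ t, (∑ s ∈ Finset.Icc 1 (t + 1), a s
        ≤ W0 + (if r 1 ≤ t then α - W0 else 0)
          + α * (((Finset.Icc 2 t).filter (fun j => r j ≤ t)).card : ℝ))
      ∧ W0 + (if r 1 ≤ t then α - W0 else 0)
          + α * (((Finset.Icc 2 t).filter (fun j => r j ≤ t)).card : ℝ)
        ≤ α * max ((((Finset.Icc 1 t).filter (fun j => r j ≤ t)).card : ℝ)) 1 := by
  have hγ : HasSum (fun j => γ (j + 1)) 1 := by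
    refine hγsum ▸ Summable.hasSum ?_
    by_contra h
    simp [tsum_eq_zero_of_not_summable h] at hγsum
  exact fun t => ⟨lordpp_sum_le_earned hγ0 hγnn hγ hW0
      (fun _ => le_apply_of_strictMonoOn_Ici_one hr1 hrmono) ha t,
    lordpp_earned_le_mul_max_card hW0.2 hr1 hrmono.monotoneOn t⟩

/-- The LORD++ update controls the LORD* FDP estimate.  Here `γ 0 = 0` encodes the
convention that `γ (t+1-r j) = 0` when the `j`-th rejection has not occurred by time `t`. -/
theorem stmt6 (γ : ℕ → ℝ) (hγ0 : γ 0 = 0) (hγnn : ∀ j, 0 ≤ γ j)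
    (hγanti : ∀ i j, 1 ≤ i → i ≤ j → γ j ≤ γ i)
    (hγsum : ∑' j, γ (j + 1) = 1)
    (α W0 : ℝ) (hα : α ∈ Set.Ioc (0:ℝ) 1) (hW0 : W0 ∈ Set.Icc 0 α)
    (r : ℕ → ℕ) (hr1 : 1 ≤ r 1) (hrmono : StrictMonoOn r (Set.Ici 1))
    (a : ℕ → ℝ) (ha0 : a 0 = 0)
    (ha : ∀ t, a (t + 1) = γ (t + 1) * W0 + γ (t + 1 - r 1) * (α - W0)
        + (∑ j ∈ Finset.Icc 2 (t + 1), γ (t + 1 - r j)) * α) :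
    ∀ t, (∑ s ∈ Finset.Icc 1 (t + 1), a s
        ≤ W0 + (if r 1 ≤ t then α - W0 else 0)
          + α * (((Finset.Icc 2 t).filter (fun j => r j ≤ t)).card : ℝ))
      ∧ W0 + (if r 1 ≤ t then α - W0 else 0)
          + α * (((Finset.Icc 2 t).filter (fun j => r j ≤ t)).card : ℝ)
        ≤ α * max ((((Finset.Icc 1 t).filter (fun j => r j ≤ t)).card : ℝ)) 1 :=
  stmt6_general γ hγ0 hγnn hγsum α W0 hW0 r hr1 hrmono a ha
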